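/- arXiv:2102.08492 — 4 statements merged into one kernel-verified Lean document; each statement's English description precedes it below -/
import Mathlib

section
/- Suppose real numbers satisfy Q ≥ Q_high − e, V ≤ V_low + e, μ ≤ μ_low + e_μ, with μ_low > 0, e_μ ≥ 0, e ≥ 0, ε > 0, μ > 0. If 2e + ε/μ_low − ε/(μ_low + e_μ) ≤ m, then max(Q_high − V_low + ε/μ_low, 0) − max(Q − V + ε/μ, 0) ≤ m. -/
/-- Stopping condition guarantee: under the confidence bounds
`Q ≥ Q_high − e`, `V ≤ V_low + e`, `μ ≤ μ_low + e_μ` with `μ_low > 0`,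
`e_μ ≥ 0`, `e ≥ 0`, `ε > 0`, `μ > 0`, if the stopping condition
`2e + ε/μ_low − ε/(μ_low + e_μ) ≤ m` holds, then
`max(Q_high − V_low + ε/μ_low, 0) − max(Q − V + ε/μ, 0) ≤ m`. -/
theorem stopping_condition_guarantee (Q V μ Qhigh Vlow μlow ε e eμ m : ℝ)
    (hε : 0 < ε) (hμ : 0 < μ) (hμlow : 0 < μlow) (he : 0 ≤ e) (heμ : 0 ≤ eμ)
    (hQ : Q ≥ Qhigh - e) (hV : V ≤ Vlow + e) (hμle : μ ≤ μlow + eμ)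
    (hstop : 2 * e + ε / μlow - ε / (μlow + eμ) ≤ m) :
    max (Qhigh - Vlow + ε / μlow) 0 - max (Q - V + ε / μ) 0 ≤ m := by
  have h1 : ε / (μlow + eμ) ≤ ε / μ := div_le_div_of_nonneg_left hε.le hμ hμle
  have h2 : ε / (μlow + eμ) ≤ ε / μlow :=
    div_le_div_of_nonneg_left hε.le hμlow (by linarith)
  rcases max_cases (Qhigh - Vlow + ε / μlow) 0 with ⟨hA, _⟩ | ⟨hA, _⟩ <;>
    rcases max_cases (Q - V + ε / μ) 0 with ⟨hB, _⟩ | ⟨hB, _⟩ <;>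
      rw [hA, hB] <;> linarith
end

section
/- For two stationary deterministic policies π and π' in a discounted MDP M, the difference in discounted average rewards satisfies ρ^π − ρ^{π'} = Σ_{s∈S} μ^{π'}(s)·(Q^π(s, π(s)) − Q^π(s, π'(s))), where μ^{π'} is the (normalized) discounted state occupancy measure of π' and ρ^π = (1−γ)·Σ_s d₀(s)·V^π(s). -/
open Finset

/-- Performance-difference lemma for deterministic policies: with
`ρ^π = (1−γ)·Σ_s d₀(s)·V^π(s)` and `μ^{π'}` the normalized discounted
occupancy measure of `π'`,
`ρ^π − ρ^{π'} = Σ_s μ^{π'}(s)·(Q^π(s, π(s)) − Q^π(s, π'(s)))`. -/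
theorem performance_difference
    {S A : Type*} [Fintype S]
    (γ : ℝ) (hγ0 : 0 ≤ γ) (hγ1 : γ < 1)
    (d₀ : S → ℝ) (hd0 : ∀ s, 0 ≤ d₀ s) (hd1 : ∑ s, d₀ s = 1)
    (R : S → A → ℝ) (P : S → A → S → ℝ)
    (hP0 : ∀ s a s', 0 ≤ P s a s') (hP1 : ∀ s a, ∑ s', P s a s' = 1)
    (π π' : S → A)
    (Vπ Vπ' : S → ℝ) (Qπ : S → A → ℝ) (μ' : S → ℝ)
    (hQπ : ∀ s a, Qπ s a = R s a + γ * ∑ s', P s a s' * Vπ s')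
    (hVπ : ∀ s, Vπ s = Qπ s (π s))
    (hVπ' : ∀ s, Vπ' s = R s (π' s) + γ * ∑ s', P s (π' s) s' * Vπ' s')
    (hμ' : ∀ s, μ' s = (1 - γ) * d₀ s + γ * ∑ s', μ' s' * P s' (π' s') s) :
    (1 - γ) * ∑ s, d₀ s * Vπ s - (1 - γ) * ∑ s, d₀ s * Vπ' s =
      ∑ s, μ' s * (Qπ s (π s) - Qπ s (π' s)) := by
  set Δ : S → ℝ := fun s => Vπ s - Vπ' s with hΔ
  have hkey : ∀ s, Qπ s (π s) - Qπ s (π' s)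
      = Δ s - γ * ∑ s', P s (π' s) s' * Δ s' := by
    intro s
    have h1 : Qπ s (π s) = Vπ s := (hVπ s).symm
    have h2 : Qπ s (π' s) = R s (π' s) + γ * ∑ s', P s (π' s) s' * Vπ s' := hQπ s (π' s)
    have h3 := hVπ' s
    have hsplit : ∑ s', P s (π' s) s' * Δ s'
        = (∑ s', P s (π' s) s' * Vπ s') - ∑ s', P s (π' s) s' * Vπ' s' := by
      rw [← Finset.sum_sub_distrib]
      simp [hΔ, mul_sub]
    rw [h1, h2, hsplit]
    simp only [hΔ]
    linarith [h3]
  have hswap : ∑ s, (∑ s', μ' s' * P s' (π' s') s) * Δ s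
      = ∑ s', μ' s' * ∑ s, P s' (π' s') s * Δ s := by
    simp only [Finset.sum_mul, Finset.mul_sum]
    rw [Finset.sum_comm]
    exact Finset.sum_congr rfl fun s' _ => Finset.sum_congr rfl fun s _ => by ring
  calc (1 - γ) * ∑ s, d₀ s * Vπ s - (1 - γ) * ∑ s, d₀ s * Vπ' s
      = ∑ s, (1 - γ) * d₀ s * Δ s := by
        rw [Finset.mul_sum, Finset.mul_sum, ← Finset.sum_sub_distrib]
        refine Finset.sum_congr rfl fun s _ => ?_
        simp only [hΔ]; ring
    _ = ∑ s, (μ' s - γ * ∑ s', μ' s' * P s' (π' s') s) * Δ s := by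
        refine Finset.sum_congr rfl fun s _ => ?_
        rw [hμ' s]; ring
    _ = ∑ s, μ' s * Δ s - γ * ∑ s, (∑ s', μ' s' * P s' (π' s') s) * Δ s := by
        rw [Finset.mul_sum, ← Finset.sum_sub_distrib]
        refine Finset.sum_congr rfl fun s _ => ?_
        ring
    _ = ∑ s, μ' s * Δ s - γ * ∑ s', μ' s' * ∑ s, P s' (π' s') s * Δ s := by
        rw [hswap]
    _ = ∑ s, μ' s * (Δ s - γ * ∑ s', P s (π' s) s' * Δ s') := by
        rw [Finset.mul_sum, ← Finset.sum_sub_distrib]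
        refine Finset.sum_congr rfl fun s _ => ?_
        ring
    _ = ∑ s, μ' s * (Qπ s (π s) - Qπ s (π' s)) := by
        exact Finset.sum_congr rfl fun s _ => by rw [hkey s]
end

section
/- In a finite discounted MDP M, a deterministic policy π is ε-robust optimal (i.e., ρ^π ≥ ρ^{π'} + ε for every deterministic policy π' ≠ π differing from π) if and only if for every state s and action a ≠ π(s), ρ^π ≥ ρ^{π⟨s,a⟩} + ε, where π⟨s,a⟩ denotes the neighbor policy equal to π everywhere except that it takes action a in state s. -/
open Finset

/-- Contraction-style comparison: if `g ≤ γ · P g` pointwise with `P` a row-stochastic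
kernel and `0 ≤ γ < 1`, then `g ≤ 0` pointwise. -/
lemma aux_nonpos {S : Type*} [Fintype S]
    (γ : ℝ) (hγ0 : 0 ≤ γ) (hγ1 : γ < 1)
    (p : S → S → ℝ) (hp0 : ∀ s s', 0 ≤ p s s') (hp1 : ∀ s, ∑ s', p s s' = 1)
    (g : S → ℝ) (hg : ∀ s, g s ≤ γ * ∑ s', p s s' * g s') : ∀ s, g s ≤ 0 := by
  intro s
  have hne : (Finset.univ : Finset S).Nonempty := ⟨s, mem_univ s⟩
  obtain ⟨b, -, hmax⟩ := Finset.exists_max_image Finset.univ g hne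
  have hsum : ∑ s', p b s' * g s' ≤ g b := by
    calc ∑ s', p b s' * g s' ≤ ∑ s', p b s' * g b :=
          Finset.sum_le_sum fun s' _ =>
            mul_le_mul_of_nonneg_left (hmax s' (mem_univ s')) (hp0 b s')
      _ = (∑ s', p b s') * g b := by rw [Finset.sum_mul]
      _ = g b := by rw [hp1 b, one_mul]
  have hb : g b ≤ γ * g b := le_trans (hg b) (mul_le_mul_of_nonneg_left hsum hγ0)
  have hb0 : g b ≤ 0 := by nlinarith
  exact le_trans (hmax s (mem_univ s)) hb0

/-- A deterministic policy `π` is ε-robust optimal (its score beats every other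
deterministic policy's score by at least `ε`) iff it beats every neighbor policy
`π⟨s,a⟩ = Function.update π s a` (for `a ≠ π(s)`) by at least `ε`. Scores are
`ρ^π = (1−γ)·Σ_s d₀(s)·V^π(s)` with `V^π` the discounted value function. -/
theorem eps_robust_iff_neighbors
    {S A : Type*} [Fintype S] [DecidableEq S]
    (γ : ℝ) (hγ0 : 0 ≤ γ) (hγ1 : γ < 1)
    (d₀ : S → ℝ) (hd0 : ∀ s, 0 < d₀ s) (hd1 : ∑ s, d₀ s = 1)
    (R : S → A → ℝ) (P : S → A → S → ℝ)
    (hP0 : ∀ s a s', 0 ≤ P s a s') (hP1 : ∀ s a, ∑ s', P s a s' = 1)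
    (V : (S → A) → S → ℝ)
    (hV : ∀ π s, V π s = R s (π s) + γ * ∑ s', P s (π s) s' * V π s')
    (ρ : (S → A) → ℝ)
    (hρ : ∀ π, ρ π = (1 - γ) * ∑ s, d₀ s * V π s)
    (π : S → A) (ε : ℝ) (hε : 0 ≤ ε) :
    (∀ π' : S → A, π' ≠ π → ρ π ≥ ρ π' + ε) ↔
      (∀ s a, a ≠ π s → ρ π ≥ ρ (Function.update π s a) + ε) := by
  classical
  have hγ1' : 0 < 1 - γ := by linarith
  -- score is monotone in the value function
  have hρle : ∀ σ τ : S → A, (∀ s, V σ s ≤ V τ s) → ρ σ ≤ ρ τ := by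
    intro σ τ hle
    rw [hρ, hρ]
    refine mul_le_mul_of_nonneg_left ?_ hγ1'.le
    exact Finset.sum_le_sum fun s _ => mul_le_mul_of_nonneg_left (hle s) (hd0 s).le
  have hρlt : ∀ σ τ : S → A, (∀ s, V σ s ≤ V τ s) → (∃ s, V σ s < V τ s) → ρ σ < ρ τ := by
    intro σ τ hle ⟨s₀, hs₀⟩
    rw [hρ, hρ]
    refine mul_lt_mul_of_pos_left ?_ hγ1'
    exact Finset.sum_lt_sum (fun s _ => mul_le_mul_of_nonneg_left (hle s) (hd0 s).le)
      ⟨s₀, mem_univ s₀, mul_lt_mul_of_pos_left hs₀ (hd0 s₀)⟩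
  -- sub-fixed-point comparison (policy improvement direction)
  have hcomp : ∀ (σ : S → A) (W : S → ℝ),
      (∀ s, W s ≤ R s (σ s) + γ * ∑ s', P s (σ s) s' * W s') → ∀ s, W s ≤ V σ s := by
    intro σ W hW
    have := aux_nonpos γ hγ0 hγ1 (fun s => P s (σ s)) (fun s => hP0 s (σ s))
      (fun s => hP1 s (σ s)) (fun s => W s - V σ s) ?_
    · intro s; linarith [this s]
    · intro s
      simp only [mul_sub, Finset.sum_sub_distrib]
      linarith [hW s, hV σ s]
  -- super-fixed-point comparison
  have hcomp2 : ∀ (σ : S → A) (W : S → ℝ),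
      (∀ s, R s (σ s) + γ * ∑ s', P s (σ s) s' * W s' ≤ W s) → ∀ s, V σ s ≤ W s := by
    intro σ W hW
    have := aux_nonpos γ hγ0 hγ1 (fun s => P s (σ s)) (fun s => hP0 s (σ s))
      (fun s => hP1 s (σ s)) (fun s => V σ s - W s) ?_
    · intro s; linarith [this s]
    · intro s
      simp only [mul_sub, Finset.sum_sub_distrib]
      linarith [hW s, hV σ s]
  constructor
  · -- easy direction: neighbors are other policies
    intro h s a ha
    refine h _ fun he => ha ?_
    have := congrFun he s
    rwa [Function.update_self] at this
  · -- hard direction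
    intro h
    -- Step 1: all actions have nonpositive advantage w.r.t. π
    have hQle : ∀ s a, R s a + γ * ∑ s', P s a s' * V π s' ≤ V π s := by
      intro s a
      by_cases haπ : a = π s
      · subst haπ; exact le_of_eq (hV π s).symm
      · by_contra hlt
        push_neg at hlt
        set n := Function.update π s a with hn
        have hW : ∀ t, V π t ≤ R t (n t) + γ * ∑ s', P t (n t) s' * V π s' := by
          intro t
          by_cases ht : t = s
          · subst ht; rw [hn, Function.update_self]; exact hlt.le
          · rw [hn, Function.update_of_ne ht]; exact (hV π t).le
        have hle := hcomp n _ hW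
        have hns : n s = a := Function.update_self s a π
        have hmono : ∑ s', P s a s' * V π s' ≤ ∑ s', P s a s' * V n s' :=
          Finset.sum_le_sum fun s' _ => mul_le_mul_of_nonneg_left (hle s') (hP0 s a s')
        have h2 : V n s = R s a + γ * ∑ s', P s a s' * V n s' := by
          have := hV n s; rwa [hns] at this
        have hstrict : V π s < V n s := by
          have := mul_le_mul_of_nonneg_left hmono hγ0
          linarith
        have hρs : ρ π < ρ n := hρlt π n hle ⟨s, hstrict⟩
        have := h s a haπ
        linarith
    -- Step 2: π is optimal
    have hopt : ∀ σ : S → A, ρ σ ≤ ρ π := by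
      intro σ
      refine hρle σ π ?_
      refine hcomp2 σ (V π) fun s => hQle s (σ s)
    -- Step 3: induction on the number of states where π' differs from π
    have key : ∀ n : ℕ, ∀ π' : S → A,
        (Finset.univ.filter fun s => π' s ≠ π s).card ≤ n → π' ≠ π → ρ π ≥ ρ π' + ε := by
      intro n
      induction n with
      | zero =>
        intro π' hcard hne
        exfalso
        apply hne
        funext t
        by_contra ht
        have : t ∈ Finset.univ.filter fun s => π' s ≠ π s := mem_filter.2 ⟨mem_univ t, ht⟩
        have := Finset.card_pos.2 ⟨t, this⟩
        omega
      | succ n ih =>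
        intro π' hcard hne
        set D := Finset.univ.filter fun s => π' s ≠ π s with hD
        have hDne : D.Nonempty := by
          obtain ⟨t, ht⟩ := Function.ne_iff.1 hne
          exact ⟨t, mem_filter.2 ⟨mem_univ t, ht⟩⟩
        by_cases h1 : D.card = 1
        · -- π' is itself a neighbor of π
          obtain ⟨s₀, hs₀⟩ := Finset.card_eq_one.1 h1
          have hπ' : π' = Function.update π s₀ (π' s₀) := by
            funext t
            by_cases ht : t = s₀
            · subst ht; rw [Function.update_self]
            · rw [Function.update_of_ne ht]
              by_contra htne
              have : t ∈ D := mem_filter.2 ⟨mem_univ t, htne⟩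
              rw [hs₀, Finset.mem_singleton] at this
              exact ht this
          have hs₀D : s₀ ∈ D := by rw [hs₀]; exact Finset.mem_singleton_self s₀
          have hne₀ : π' s₀ ≠ π s₀ := (mem_filter.1 hs₀D).2
          have := h s₀ (π' s₀) hne₀
          rw [← hπ'] at this
          exact this
        · have h2 : 2 ≤ D.card := by
            have := Finset.card_pos.2 hDne; omega
          by_cases hc : ∃ s₀ ∈ D, V π' s₀ ≤ R s₀ (π s₀) + γ * ∑ s', P s₀ (π s₀) s' * V π' s'
          · -- can revert one differing state without losing score
            obtain ⟨s₀, hs₀D, hs₀⟩ := hc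
            set σ' := Function.update π' s₀ (π s₀) with hσ'
            have hW : ∀ t, V π' t ≤ R t (σ' t) + γ * ∑ s', P t (σ' t) s' * V π' s' := by
              intro t
              by_cases ht : t = s₀
              · subst ht; rw [hσ', Function.update_self]; exact hs₀
              · rw [hσ', Function.update_of_ne ht]; exact (hV π' t).le
            have hle := hcomp σ' _ hW
            have hρ1 : ρ π' ≤ ρ σ' := hρle _ _ hle
            obtain ⟨s₁, hs₁D, hs₁ne⟩ := Finset.exists_mem_ne (s := D) (by omega) s₀
            have hσne : σ' ≠ π := by
              intro he
              have := congrFun he s₁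
              rw [hσ', Function.update_of_ne hs₁ne] at this
              exact (mem_filter.1 hs₁D).2 this
            have hsub : (Finset.univ.filter fun s => σ' s ≠ π s) ⊆ D.erase s₀ := by
              intro t ht
              have htne := (mem_filter.1 ht).2
              have ht₀ : t ≠ s₀ := by
                intro he; subst he
                rw [hσ', Function.update_self] at htne
                exact htne rfl
              rw [hσ', Function.update_of_ne ht₀] at htne
              exact Finset.mem_erase.2 ⟨ht₀, mem_filter.2 ⟨mem_univ t, htne⟩⟩
            have hcard2 : (Finset.univ.filter fun s => σ' s ≠ π s).card ≤ n := by
              have hc1 := Finset.card_le_card hsub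
              have hc2 := Finset.card_erase_of_mem hs₀D
              omega
            have := ih σ' hcard2 hσne
            linarith
          · -- every reversion strictly hurts: contradiction with optimality of π
            exfalso
            push_neg at hc
            have hW2 : ∀ t, R t (π t) + γ * ∑ s', P t (π t) s' * V π' s' ≤ V π' t := by
              intro t
              by_cases ht : t ∈ D
              · exact (hc t ht).le
              · have hteq : π' t = π t := by
                  by_contra htne
                  exact ht (mem_filter.2 ⟨mem_univ t, htne⟩)
                rw [← hteq]; exact (hV π' t).ge
            have hlep : ∀ s, V π s ≤ V π' s := hcomp2 π (V π') hW2
            obtain ⟨s₀, hs₀D⟩ := hDne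
            have hmono : ∑ s', P s₀ (π s₀) s' * V π s' ≤ ∑ s', P s₀ (π s₀) s' * V π' s' :=
              Finset.sum_le_sum fun s' _ =>
                mul_le_mul_of_nonneg_left (hlep s') (hP0 s₀ (π s₀) s')
            have hstrict : V π s₀ < V π' s₀ := by
              have h3 := hV π s₀
              have h4 := hc s₀ hs₀D
              have := mul_le_mul_of_nonneg_left hmono hγ0
              linarith
            have : ρ π < ρ π' := hρlt _ _ hlep ⟨s₀, hstrict⟩
            linarith [hopt π']
    intro π' hne
    exact key _ π' le_rfl hne
end

section
/- Let M be a finite MDP with target policy π†, and define Δ*(s,a) = max(Q^{π†}(s,a) − V^{π†}(s) + ε/μ^{π†⟨s,a⟩}(s), 0) for a ≠ π†(s) and Δ*(s, π†(s)) = 0. Then a perturbation Δ : S × A → ℝ≥0 with Δ(s, π†(s)) = 0 makes π† ε-robust optimal in the modified MDP M' = (S, A, R − Δ, P) if and only if Δ(s,a) ≥ Δ*(s,a) for all s, a. In particular, Δ* is the minimal (hence optimal-cost) such perturbation. -/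
open Finset

/-- Performance-difference identity, abstract form. -/
lemma perf_diff {S : Type*} [Fintype S] (γ : ℝ) (d₀ : S → ℝ) (P' : S → S → ℝ)
    (μ' g Adv : S → ℝ)
    (hg : ∀ x, g x = Adv x + γ * ∑ y, P' x y * g y)
    (hμ' : ∀ y, μ' y = (1 - γ) * d₀ y + γ * ∑ x, μ' x * P' x y) :
    ∑ x, μ' x * Adv x = (1 - γ) * ∑ x, d₀ x * g x := by
  have step1 : ∑ x, μ' x * Adv x
      = ∑ x, μ' x * g x - ∑ x, ∑ y, γ * (μ' x * P' x y) * g y := by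
    rw [← Finset.sum_sub_distrib]
    refine Finset.sum_congr rfl fun x _ => ?_
    have hA : Adv x = g x - γ * ∑ y, P' x y * g y := by linarith [hg x]
    rw [hA, mul_sub]
    congr 1
    rw [Finset.mul_sum, Finset.mul_sum]
    refine Finset.sum_congr rfl fun y _ => ?_
    ring
  have step2 : ∑ x, ∑ y, γ * (μ' x * P' x y) * g y
      = ∑ y, (μ' y - (1 - γ) * d₀ y) * g y := by
    rw [Finset.sum_comm]
    refine Finset.sum_congr rfl fun y _ => ?_
    have h2 : γ * ∑ x, μ' x * P' x y = μ' y - (1 - γ) * d₀ y := by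
      linarith [hμ' y]
    calc ∑ x, γ * (μ' x * P' x y) * g y
        = (γ * ∑ x, μ' x * P' x y) * g y := by
          rw [Finset.mul_sum, Finset.sum_mul]
      _ = (μ' y - (1 - γ) * d₀ y) * g y := by rw [h2]
  rw [step1, step2, Finset.mul_sum, ← Finset.sum_sub_distrib]
  refine Finset.sum_congr rfl fun x _ => ?_
  ring

/-- Uniqueness of the Bellman fixed point for `γ < 1`. -/
lemma fixed_unique {S : Type*} [Fintype S] [Nonempty S] (γ : ℝ) (hγ0 : 0 ≤ γ) (hγ1 : γ < 1)
    (P' : S → S → ℝ) (hP0 : ∀ x y, 0 ≤ P' x y) (hP1 : ∀ x, ∑ y, P' x y = 1)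
    (r f g : S → ℝ)
    (hf : ∀ x, f x = r x + γ * ∑ y, P' x y * f y)
    (hg : ∀ x, g x = r x + γ * ∑ y, P' x y * g y) :
    ∀ x, f x = g x := by
  have hrec : ∀ x, f x - g x = γ * ∑ y, P' x y * (f y - g y) := by
    intro x
    have h3 : ∑ y, P' x y * (f y - g y) = ∑ y, P' x y * f y - ∑ y, P' x y * g y := by
      rw [← Finset.sum_sub_distrib]
      exact Finset.sum_congr rfl fun y _ => by ring
    rw [h3]; linarith [hf x, hg x]
  obtain ⟨x₀, -, hx₀⟩ := Finset.exists_max_image Finset.univ (fun x => |f x - g x|)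
    ⟨Classical.arbitrary S, Finset.mem_univ _⟩
  have habs : ∀ x, |f x - g x| ≤ γ * |f x₀ - g x₀| := by
    intro x
    rw [hrec x, abs_mul, abs_of_nonneg hγ0]
    have : |∑ y, P' x y * (f y - g y)| ≤ |f x₀ - g x₀| := by
      calc |∑ y, P' x y * (f y - g y)| ≤ ∑ y, |P' x y * (f y - g y)| :=
            Finset.abs_sum_le_sum_abs _ _
        _ = ∑ y, P' x y * |f y - g y| := by
            refine Finset.sum_congr rfl fun y _ => ?_
            rw [abs_mul, abs_of_nonneg (hP0 x y)]
        _ ≤ ∑ y, P' x y * |f x₀ - g x₀| := by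
            refine Finset.sum_le_sum fun y _ => ?_
            exact mul_le_mul_of_nonneg_left (hx₀ y (Finset.mem_univ y)) (hP0 x y)
        _ = |f x₀ - g x₀| := by rw [← Finset.sum_mul, hP1 x, one_mul]
    exact mul_le_mul_of_nonneg_left this hγ0
  have h0 : |f x₀ - g x₀| = 0 := by
    have := habs x₀
    nlinarith [abs_nonneg (f x₀ - g x₀)]
  intro x
  have hx := habs x
  rw [h0, mul_zero] at hx
  have hx0 : |f x - g x| = 0 := le_antisymm hx (abs_nonneg _)
  have := abs_eq_zero.mp hx0
  linarith

/-- White-box attack characterization: a nonnegative perturbation `Δ` with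
`Δ(s, π†(s)) = 0` makes the target policy `π†` ε-robust optimal in the modified
MDP `M' = (S, A, R − Δ, P)` iff `Δ(s,a) ≥ Δ*(s,a)` for all `s, a`, where
`Δ*(s,a) = max(Q^{π†}(s,a) − V^{π†}(s) + ε/μ^{π†⟨s,a⟩}(s), 0)` for `a ≠ π†(s)`
and `Δ*(s, π†(s)) = 0`. In particular `Δ*` is the minimal such perturbation.
Here `V` (resp. `V'`) are the value functions in `M` (resp. `M'`), `μ π` is the
normalized discounted occupancy measure of `π`, and scores are
`ρ^π = (1−γ)·Σ_s d₀(s)·V^π(s)`. -/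
theorem white_box_attack_characterization
    {S A : Type*} [Fintype S] [DecidableEq S] [DecidableEq A]
    (γ ε : ℝ) (hγ0 : 0 ≤ γ) (hγ1 : γ < 1) (hε : 0 < ε)
    (d₀ : S → ℝ) (hd0 : ∀ s, 0 ≤ d₀ s) (hd1 : ∑ s, d₀ s = 1)
    (R : S → A → ℝ) (P : S → A → S → ℝ)
    (hP0 : ∀ s a s', 0 ≤ P s a s') (hP1 : ∀ s a, ∑ s', P s a s' = 1)
    (πt : S → A)
    (V : (S → A) → S → ℝ)
    (hV : ∀ π s, V π s = R s (π s) + γ * ∑ s', P s (π s) s' * V π s')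
    (μ : (S → A) → S → ℝ)
    (hμ : ∀ π s, μ π s = (1 - γ) * d₀ s + γ * ∑ s', μ π s' * P s' (π s') s)
    (hμpos : ∀ s a, 0 < μ (Function.update πt s a) s)
    (Δ : S → A → ℝ) (hΔ0 : ∀ s a, 0 ≤ Δ s a) (hΔπ : ∀ s, Δ s (πt s) = 0)
    (V' : (S → A) → S → ℝ)
    (hV' : ∀ π s, V' π s =
      (R s (π s) - Δ s (π s)) + γ * ∑ s', P s (π s) s' * V' π s') :
    (∀ s a, a ≠ πt s →
        (1 - γ) * ∑ x, d₀ x * V' πt x ≥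
          (1 - γ) * ∑ x, d₀ x * V' (Function.update πt s a) x + ε) ↔
      (∀ s a, Δ s a ≥
        if a = πt s then 0 else
          max ((R s a + γ * ∑ s', P s a s' * V πt s') - V πt s +
                ε / μ (Function.update πt s a) s) 0) := by
  have hSne : Nonempty S := by
    by_contra h
    rw [not_nonempty_iff] at h
    rw [Finset.univ_eq_empty, Finset.sum_empty] at hd1
    exact one_ne_zero hd1.symm
  -- V' πt = V πt since Δ vanishes along πt
  have hVV : ∀ x, V' πt x = V πt x := by
    refine fixed_unique γ hγ0 hγ1 (fun x y => P x (πt x) y)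
      (fun x y => hP0 x (πt x) y) (fun x => hP1 x (πt x)) (fun x => R x (πt x))
      _ _ ?_ (fun x => hV πt x)
    intro x
    have hvx := hV' πt x
    rw [hΔπ x] at hvx
    simpa using hvx
  have key : ∀ s a, a ≠ πt s →
      ((1 - γ) * ∑ x, d₀ x * V' πt x ≥
          (1 - γ) * ∑ x, d₀ x * V' (Function.update πt s a) x + ε ↔
        Δ s a ≥ max ((R s a + γ * ∑ s', P s a s' * V πt s') - V πt s +
            ε / μ (Function.update πt s a) s) 0) := by
    intro s a ha
    set π' := Function.update πt s a with hπ'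
    set Adv : S → ℝ := fun x =>
      (R x (π' x) - Δ x (π' x)) + γ * ∑ y, P x (π' x) y * V' πt y - V' πt x with hAdv
    have hpd : ∑ x, μ π' x * Adv x
        = (1 - γ) * ∑ x, d₀ x * (V' π' x - V' πt x) := by
      refine perf_diff γ d₀ (fun x y => P x (π' x) y) (μ π') _ _ ?_ (fun y => hμ π' y)
      intro x
      have hsplit : ∑ y, P x (π' x) y * (V' π' y - V' πt y)
          = (∑ y, P x (π' x) y * V' π' y) - ∑ y, P x (π' x) y * V' πt y := by
        rw [← Finset.sum_sub_distrib]
        exact Finset.sum_congr rfl fun y _ => by ring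
      simp only [hAdv]
      rw [hsplit]
      linear_combination hV' π' x
    have hAdv0 : ∀ x, x ≠ s → Adv x = 0 := by
      intro x hx
      have hupd : π' x = πt x := Function.update_of_ne hx a πt
      simp only [hAdv, hupd, hΔπ x]
      have hvx := hV' πt x
      rw [hΔπ x] at hvx
      linarith
    have hsum : ∑ x, μ π' x * Adv x = μ π' s * Adv s := by
      refine Finset.sum_eq_single s (fun x _ hx => by rw [hAdv0 x hx, mul_zero])
        (fun hs => absurd (Finset.mem_univ s) hs)
    set Q : ℝ := (R s a + γ * ∑ s', P s a s' * V πt s') - V πt s with hQ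
    have hAdvs : Adv s = Q - Δ s a := by
      have hπs : π' s = a := Function.update_self s a πt
      simp only [hAdv, hπs, hQ]
      have hS : ∑ y, P s a y * V' πt y = ∑ y, P s a y * V πt y :=
        Finset.sum_congr rfl fun y _ => by rw [hVV y]
      rw [hS, hVV s]
      ring
    have hsplit2 : ∑ x, d₀ x * (V' π' x - V' πt x)
        = ∑ x, d₀ x * V' π' x - ∑ x, d₀ x * V' πt x := by
      rw [← Finset.sum_sub_distrib]
      exact Finset.sum_congr rfl fun x _ => by ring
    have hρ : μ π' s * Adv s
        = (1 - γ) * ∑ x, d₀ x * V' π' x - (1 - γ) * ∑ x, d₀ x * V' πt x := by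
      rw [← hsum, hpd, hsplit2]; ring
    have hμs : 0 < μ π' s := hμpos s a
    constructor
    · intro h
      have h1 : μ π' s * (Q - Δ s a) ≤ -ε := by
        rw [← hAdvs]; linarith [hρ]
      refine max_le ?_ (hΔ0 s a)
      have h2 : ε / μ π' s ≤ Δ s a - Q := by
        rw [div_le_iff₀ hμs]
        nlinarith [h1]
      linarith
    · intro h
      have h2 : Q + ε / μ π' s ≤ Δ s a := le_trans (le_max_left _ _) h
      have h3 : ε ≤ (Δ s a - Q) * μ π' s := by
        rw [← div_le_iff₀ hμs]; linarith
      have h1 : μ π' s * Adv s ≤ -ε := by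
        rw [hAdvs]; nlinarith
      linarith [hρ]
  constructor
  · intro h s a
    by_cases hsa : a = πt s
    · rw [if_pos hsa]
      exact hΔ0 s a
    · rw [if_neg hsa]
      exact (key s a hsa).mp (h s a hsa)
  · intro h s a hsa
    refine (key s a hsa).mpr ?_
    have := h s a
    rwa [if_neg hsa] at this
end
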